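/- Assume Young's relation γ_LV cos θ_Y = γ_SV − γ_SL for some angle θ_Y, and define the two-phase energy Ẽ(u) = E^{δt}(u, χ_Ω − u) for bounded measurable u with 0 ≤ u ≤ 1 vanishing outside Ω. Then for all such u and v, Ẽ(u) − Ẽ(v) = (γ_LV/√δt) ∫ (u−v) (G_{δt} * (χ_Ω − 2v − cos(θ_Y)·χ_{D₃})) − (γ_LV/√δt) ∫ (u−v)(G_{δt}*(u−v)); in particular, Ẽ(u) ≤ Ẽ(v) + (γ_LV/√δt) ∫ (u−v) (G_{δt} * (χ_Ω − 2v − cos(θ_Y)·χ_{D₃})), i.e. the exact second-order term of the expansion of Ẽ is nonpositive. -/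

import Mathlib

/-!
The energy is assembled from the pairing `B(f, g) = ∫ f (G_{δt} * g)` on bounded integrable
functions. It is symmetric because `G_{δt}` is even, and positive semidefinite because of the
semigroup law `G_{δt} = G_{δt/2} * G_{δt/2}`, which gives `B(f, f) = ∫ (G_{δt/2} * f)²`.
Expanding `Ẽ(u) - Ẽ(v)` bilinearly, Young's relation merges the two solid terms into
`γ_LV cos θ_Y B(u - v, χ_{D₃})`, and what remains is exactly `-γ_LV B(u - v, u - v) ≤ 0`.
-/

open MeasureTheory Real Set

/-- The Gaussian (heat) kernel `G_t(x) = (4πt)^{-n/2} exp(-|x|²/(4t))` on `ℝⁿ`. -/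
noncomputable def gauss (n : ℕ) (t : ℝ) (x : EuclideanSpace ℝ (Fin n)) : ℝ :=
  (4 * Real.pi * t) ^ (-(n : ℝ) / 2) * Real.exp (-‖x‖ ^ 2 / (4 * t))

/-- Convolution with the Gaussian kernel: `(G_t * f)(x) = ∫ G_t(x - y) f(y) dy`. -/
noncomputable def gconv (n : ℕ) (t : ℝ) (f : EuclideanSpace ℝ (Fin n) → ℝ)
    (x : EuclideanSpace ℝ (Fin n)) : ℝ :=
  ∫ y, gauss n t (x - y) * f y

/-- The indicator function `χ_A` of a set `A ⊆ ℝⁿ`. -/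
noncomputable def chi (n : ℕ) (A : Set (EuclideanSpace ℝ (Fin n))) :
    EuclideanSpace ℝ (Fin n) → ℝ :=
  Set.indicator A fun _ => (1 : ℝ)

/-- The approximate interfacial energy
`E^{δt}(u₁,u₂) = (1/√δt)[γ_LV ∫ u₁ (G_{δt}*u₂) + γ_SL ∫ u₁ (G_{δt}*χ_{D₃})
  + γ_SV ∫ u₂ (G_{δt}*χ_{D₃})]`. -/
noncomputable def Efun (n : ℕ) (δt γLV γSL γSV : ℝ) (D₃ : Set (EuclideanSpace ℝ (Fin n)))
    (u₁ u₂ : EuclideanSpace ℝ (Fin n) → ℝ) : ℝ :=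
  (1 / Real.sqrt δt) *
    (γLV * (∫ x, u₁ x * gconv n δt u₂ x)
      + γSL * (∫ x, u₁ x * gconv n δt (chi n D₃) x)
      + γSV * ∫ x, u₂ x * gconv n δt (chi n D₃) x)

section Gaussian

variable {n : ℕ}

lemma gauss_nonneg {t : ℝ} (ht : 0 ≤ t) (x : EuclideanSpace ℝ (Fin n)) : 0 ≤ gauss n t x := by
  unfold gauss; positivity

lemma gauss_le {t : ℝ} (ht : 0 ≤ t) (x : EuclideanSpace ℝ (Fin n)) :
    gauss n t x ≤ (4 * π * t) ^ (-(n : ℝ) / 2) := by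
  refine mul_le_of_le_one_right (by positivity) (exp_le_one_iff.mpr ?_)
  exact div_nonpos_of_nonpos_of_nonneg (neg_nonpos.mpr (by positivity)) (by positivity)

lemma continuous_gauss (t : ℝ) : Continuous (gauss n t) := by
  unfold gauss; fun_prop

lemma gauss_sub_comm (t : ℝ) (x y : EuclideanSpace ℝ (Fin n)) :
    gauss n t (x - y) = gauss n t (y - x) := by
  rw [gauss, gauss, norm_sub_rev]

lemma integral_gauss {t : ℝ} (ht : 0 < t) : ∫ x, gauss n t x = 1 := by
  have hexp : ∀ x : EuclideanSpace ℝ (Fin n),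
      exp (-‖x‖ ^ 2 / (4 * t)) = exp (-(4 * t)⁻¹ * ‖x‖ ^ 2) := fun x => by
    congr 1; ring
  simp only [gauss, hexp]
  rw [integral_const_mul, GaussianFourier.integral_rexp_neg_mul_sq_norm (by positivity),
    finrank_euclideanSpace_fin, div_inv_eq_mul, neg_div, rpow_neg (by positivity),
    show π * (4 * t) = 4 * π * t by ring]
  exact inv_mul_cancel₀ (by positivity)

lemma integrable_gauss {t : ℝ} (ht : 0 < t) : Integrable (gauss n t) :=
  integrable_of_integral_eq_one (integral_gauss ht)

lemma gauss_mul_gauss {s : ℝ} (hs : 0 < s) (x y z : EuclideanSpace ℝ (Fin n)) :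
    gauss n s (x - z) * gauss n s (y - z)
      = gauss n (2 * s) (x - y) * gauss n (s / 2) ((2 : ℝ)⁻¹ • (x + y) - z) := by
  have hpar : ‖x - z‖ ^ 2 + ‖y - z‖ ^ 2 = ‖x - y‖ ^ 2 / 2 + 2 * ‖(2 : ℝ)⁻¹ • (x + y) - z‖ ^ 2 := by
    have h := parallelogram_law_with_norm ℝ (x - z) (y - z)
    rw [show x - z + (y - z) = (2 : ℝ) • ((2 : ℝ)⁻¹ • (x + y) - z) by module,
      sub_sub_sub_cancel_right, norm_smul, Real.norm_two] at h
    linarith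
  have hconst : (4 * π * s) ^ (-(n : ℝ) / 2) * (4 * π * s) ^ (-(n : ℝ) / 2)
      = (4 * π * (2 * s)) ^ (-(n : ℝ) / 2) * (4 * π * (s / 2)) ^ (-(n : ℝ) / 2) := by
    rw [← mul_rpow (by positivity) (by positivity), ← mul_rpow (by positivity) (by positivity)]
    ring_nf
  have hexp : -‖x - z‖ ^ 2 / (4 * s) + -‖y - z‖ ^ 2 / (4 * s)
      = -‖x - y‖ ^ 2 / (4 * (2 * s)) + -‖(2 : ℝ)⁻¹ • (x + y) - z‖ ^ 2 / (4 * (s / 2)) := by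
    field_simp
    linarith
  simp only [gauss]
  rw [mul_mul_mul_comm, ← exp_add, hexp, exp_add, hconst, mul_mul_mul_comm]

lemma integral_gauss_mul_gauss {s : ℝ} (hs : 0 < s) (x y : EuclideanSpace ℝ (Fin n)) :
    ∫ z, gauss n s (x - z) * gauss n s (y - z) = gauss n (2 * s) (x - y) := by
  simp only [gauss_mul_gauss hs]
  rw [integral_const_mul, integral_sub_left_eq_self (gauss n (s / 2)),
    integral_gauss (by positivity), mul_one]

lemma integrable_gauss_integrand {t : ℝ} (ht : 0 < t) {f g : EuclideanSpace ℝ (Fin n) → ℝ}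
    (hf : AEStronglyMeasurable f) {C : ℝ} (hfC : ∀ x, |f x| ≤ C) (hg : Integrable g) :
    Integrable (fun p : EuclideanSpace ℝ (Fin n) × EuclideanSpace ℝ (Fin n) =>
      f p.1 * gauss n t (p.1 - p.2) * g p.2) (volume.prod volume) := by
  refine ((hg.convolution_integrand (ContinuousLinearMap.mul ℝ ℝ) (integrable_gauss ht)).bdd_mul
    hf.comp_fst (ae_of_all _ fun p => (Real.norm_eq_abs _).trans_le (hfC p.1))).congr
    (ae_of_all _ fun p => ?_)
  simp only [ContinuousLinearMap.mul_apply']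
  ring

lemma integral_mul_gconv {t : ℝ} (ht : 0 < t) {f g : EuclideanSpace ℝ (Fin n) → ℝ}
    (hf : AEStronglyMeasurable f) {C : ℝ} (hfC : ∀ x, |f x| ≤ C) (hg : Integrable g) :
    ∫ x, f x * gconv n t g x
      = ∫ p, f p.1 * gauss n t (p.1 - p.2) * g p.2 ∂(volume.prod volume) := by
  rw [← integral_integral (f := fun x y => f x * gauss n t (x - y) * g y)
    (integrable_gauss_integrand ht hf hfC hg)]
  simp only [gconv, ← integral_const_mul, mul_assoc]

lemma integral_mul_gram_nonneg {α β : Type*} [MeasurableSpace α] [MeasurableSpace β]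
    {μ : Measure α} {ν : Measure β} [SFinite μ] [SFinite ν] (f : α → ℝ) (k : α → β → ℝ)
    (h : Integrable (fun q : (α × α) × β => f q.1.1 * k q.1.1 q.2 * (f q.1.2 * k q.1.2 q.2))
      ((μ.prod μ).prod ν)) :
    0 ≤ ∫ p, f p.1 * (∫ z, k p.1 z * k p.2 z ∂ν) * f p.2 ∂(μ.prod μ) := by
  calc (0 : ℝ) ≤ ∫ z, (∫ x, f x * k x z ∂μ) ^ 2 ∂ν := integral_nonneg fun z => sq_nonneg _
    _ = ∫ z, ∫ p, f p.1 * k p.1 z * (f p.2 * k p.2 z) ∂(μ.prod μ) ∂ν := by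
      simp only [sq, ← integral_prod_mul]
    _ = ∫ p, ∫ z, f p.1 * k p.1 z * (f p.2 * k p.2 z) ∂ν ∂(μ.prod μ) :=
      (integral_integral_swap h).symm
    _ = ∫ p, f p.1 * (∫ z, k p.1 z * k p.2 z ∂ν) * f p.2 ∂(μ.prod μ) := by
      congr 1 with p
      rw [← integral_const_mul, ← integral_mul_const]
      congr 1 with z
      ring

lemma integral_mul_gconv_comm {t : ℝ} (ht : 0 < t) {f g : EuclideanSpace ℝ (Fin n) → ℝ}
    (hf : Integrable f) {C : ℝ} (hfC : ∀ x, |f x| ≤ C) (hg : Integrable g) {D : ℝ}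
    (hgD : ∀ x, |g x| ≤ D) :
    ∫ x, f x * gconv n t g x = ∫ x, g x * gconv n t f x := by
  rw [integral_mul_gconv ht hf.aestronglyMeasurable hfC hg,
    integral_mul_gconv ht hg.aestronglyMeasurable hgD hf, ← integral_prod_swap]
  congr 1 with p
  rw [Prod.fst_swap, Prod.snd_swap, gauss_sub_comm]
  ring

lemma integrable_gauss_gram_integrand {s : ℝ} (hs : 0 < s) {f : EuclideanSpace ℝ (Fin n) → ℝ}
    (hf : Integrable f) {C : ℝ} (hfC : ∀ x, |f x| ≤ C) :
    Integrable (fun q : (EuclideanSpace ℝ (Fin n) × EuclideanSpace ℝ (Fin n)) ×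
        EuclideanSpace ℝ (Fin n) =>
      f q.1.1 * gauss n s (q.1.1 - q.2) * (f q.1.2 * gauss n s (q.1.2 - q.2)))
      ((volume.prod volume).prod volume) := by
  have hnorm : ∀ p : EuclideanSpace ℝ (Fin n) × EuclideanSpace ℝ (Fin n), ∀ z,
      ‖f p.1 * gauss n s (p.1 - z) * (f p.2 * gauss n s (p.2 - z))‖
        = |f p.1| * |f p.2| * (gauss n s (p.1 - z) * gauss n s (p.2 - z)) := fun p z => by
    rw [Real.norm_eq_abs, abs_mul, abs_mul, abs_mul, abs_of_nonneg (gauss_nonneg hs.le _),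
      abs_of_nonneg (gauss_nonneg hs.le _)]
    ring
  have hG := continuous_gauss (n := n) s
  refine (integrable_prod_iff ?_).2 ⟨ae_of_all _ fun p => ?_, ?_⟩
  · exact (hf.aestronglyMeasurable.comp_fst.comp_fst.mul
      (hG.comp (by fun_prop)).aestronglyMeasurable).mul
      (hf.aestronglyMeasurable.comp_snd.comp_fst.mul (hG.comp (by fun_prop)).aestronglyMeasurable)
  · have hk : Integrable fun z => gauss n s (p.1 - z) * gauss n s (p.2 - z) :=
      ((integrable_gauss hs).comp_sub_left p.2).bdd_mul
        (hG.comp (continuous_sub_left p.1)).aestronglyMeasurable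
        (ae_of_all _ fun z => (norm_of_nonneg (gauss_nonneg hs.le _)).trans_le (gauss_le hs.le _))
    exact (hk.const_mul (f p.1 * f p.2)).congr (ae_of_all _ fun z => by ring)
  · simp only [hnorm, integral_const_mul, integral_gauss_mul_gauss hs]
    refine (integrable_gauss_integrand (t := 2 * s) (by positivity) hf.norm.aestronglyMeasurable
      (C := C) (fun x => by rw [abs_norm]; exact hfC x) hf.norm).congr (ae_of_all _ fun p => ?_)
    simp only [Real.norm_eq_abs]
    ring

lemma integral_mul_gconv_self_nonneg {t : ℝ} (ht : 0 < t) {f : EuclideanSpace ℝ (Fin n) → ℝ}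
    (hf : Integrable f) {C : ℝ} (hfC : ∀ x, |f x| ≤ C) :
    0 ≤ ∫ x, f x * gconv n t f x := by
  have hsemigroup : ∀ x y : EuclideanSpace ℝ (Fin n),
      gauss n t (x - y) = ∫ z, gauss n (t / 2) (x - z) * gauss n (t / 2) (y - z) := fun x y => by
    rw [integral_gauss_mul_gauss (by positivity), mul_div_cancel₀ t two_ne_zero]
  rw [integral_mul_gconv ht hf.aestronglyMeasurable hfC hf]
  simp only [hsemigroup]
  exact integral_mul_gram_nonneg f (fun x z => gauss n (t / 2) (x - z))
    (integrable_gauss_gram_integrand (by positivity) hf hfC)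

lemma integral_add_mul_gconv {t : ℝ} (ht : 0 < t) {f₁ f₂ g : EuclideanSpace ℝ (Fin n) → ℝ}
    (hf₁ : AEStronglyMeasurable f₁) {C₁ : ℝ} (hf₁C : ∀ x, |f₁ x| ≤ C₁)
    (hf₂ : AEStronglyMeasurable f₂) {C₂ : ℝ} (hf₂C : ∀ x, |f₂ x| ≤ C₂) (hg : Integrable g) :
    ∫ x, (f₁ + f₂) x * gconv n t g x
      = (∫ x, f₁ x * gconv n t g x) + ∫ x, f₂ x * gconv n t g x := by
  rw [integral_mul_gconv ht (hf₁.add hf₂) (C := C₁ + C₂)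
      (fun x => (abs_add_le _ _).trans (add_le_add (hf₁C x) (hf₂C x))) hg,
    integral_mul_gconv ht hf₁ hf₁C hg, integral_mul_gconv ht hf₂ hf₂C hg,
    ← integral_add (integrable_gauss_integrand ht hf₁ hf₁C hg)
      (integrable_gauss_integrand ht hf₂ hf₂C hg)]
  congr 1 with p
  rw [Pi.add_apply]
  ring

lemma integral_mul_gconv_add {t : ℝ} (ht : 0 < t) {f g₁ g₂ : EuclideanSpace ℝ (Fin n) → ℝ}
    (hf : AEStronglyMeasurable f) {C : ℝ} (hfC : ∀ x, |f x| ≤ C) (hg₁ : Integrable g₁)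
    (hg₂ : Integrable g₂) :
    ∫ x, f x * gconv n t (g₁ + g₂) x
      = (∫ x, f x * gconv n t g₁ x) + ∫ x, f x * gconv n t g₂ x := by
  rw [integral_mul_gconv ht hf hfC (hg₁.add hg₂), integral_mul_gconv ht hf hfC hg₁,
    integral_mul_gconv ht hf hfC hg₂, ← integral_add (integrable_gauss_integrand ht hf hfC hg₁)
      (integrable_gauss_integrand ht hf hfC hg₂)]
  congr 1 with p
  rw [Pi.add_apply]
  ring

variable (n) in
def boundedIntegrable : Submodule ℝ (EuclideanSpace ℝ (Fin n) → ℝ) where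
  carrier := {f | Integrable f ∧ ∃ C, ∀ x, |f x| ≤ C}
  add_mem' := fun ⟨hf, C, hC⟩ ⟨hg, D, hD⟩ =>
    ⟨hf.add hg, C + D, fun x => (abs_add_le _ _).trans (add_le_add (hC x) (hD x))⟩
  zero_mem' := ⟨integrable_zero _ _ _, 0, fun _ => by simp⟩
  smul_mem' := fun c f ⟨hf, C, hC⟩ =>
    ⟨hf.const_mul c, |c| * C, fun x => by
      rw [Pi.smul_apply, smul_eq_mul, abs_mul]
      exact mul_le_mul_of_nonneg_left (hC x) (abs_nonneg c)⟩

lemma mem_boundedIntegrable {f : EuclideanSpace ℝ (Fin n) → ℝ}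
    {s : Set (EuclideanSpace ℝ (Fin n))} (hs : volume s < ⊤) (hf : AEStronglyMeasurable f)
    {C : ℝ} (hfC : ∀ x, |f x| ≤ C) (hf0 : ∀ x ∉ s, f x = 0) : f ∈ boundedIntegrable n :=
  ⟨(IntegrableOn.of_bound hs hf.restrict C (ae_of_all _ hfC)).integrable_of_forall_notMem_eq_zero
    hf0, C, hfC⟩

lemma chi_mem_boundedIntegrable {A : Set (EuclideanSpace ℝ (Fin n))} (hA : MeasurableSet A)
    (hA' : volume A < ⊤) : chi n A ∈ boundedIntegrable n :=
  mem_boundedIntegrable hA' (aestronglyMeasurable_const.indicator hA) (C := 1)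
    (fun x => by by_cases hx : x ∈ A <;> simp [chi, hx]) (fun x hx => by simp [chi, hx])

noncomputable def gaussForm {t : ℝ} (ht : 0 < t) : LinearMap.BilinForm ℝ (boundedIntegrable n) :=
  LinearMap.mk₂ ℝ (fun f g => ∫ x, (f : EuclideanSpace ℝ (Fin n) → ℝ) x * gconv n t g x)
    (fun f₁ f₂ g => integral_add_mul_gconv ht f₁.2.1.aestronglyMeasurable f₁.2.2.choose_spec
      f₂.2.1.aestronglyMeasurable f₂.2.2.choose_spec g.2.1)
    (fun c f g => by
      simp only [Submodule.coe_smul, Pi.smul_apply, smul_eq_mul, mul_assoc, integral_const_mul])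
    (fun f g₁ g₂ => integral_mul_gconv_add ht f.2.1.aestronglyMeasurable f.2.2.choose_spec
      g₁.2.1 g₂.2.1)
    (fun c f g => by
      simp only [Submodule.coe_smul, Pi.smul_apply, smul_eq_mul, gconv, mul_left_comm _ c,
        integral_const_mul])

lemma gaussForm_isSymm {t : ℝ} (ht : 0 < t) : (gaussForm (n := n) ht).IsSymm :=
  ⟨fun f g => integral_mul_gconv_comm ht f.2.1 f.2.2.choose_spec g.2.1 g.2.2.choose_spec⟩

lemma gaussForm_self_nonneg {t : ℝ} (ht : 0 < t) (f : boundedIntegrable n) :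
    0 ≤ gaussForm ht f f :=
  integral_mul_gconv_self_nonneg ht f.2.1 f.2.2.choose_spec

end Gaussian

section TwoPhaseEnergy

variable {R M : Type*} [CommRing R] [AddCommGroup M] [Module R M]

def twoPhaseEnergy (β : LinearMap.BilinForm R M) (γLV γSL γSV : R) (χ d w : M) : R :=
  γLV * β w (χ - w) + γSL * β w d + γSV * β (χ - w) d

lemma twoPhaseEnergy_sub {β : LinearMap.BilinForm R M} (hβ : β.IsSymm) {γLV γSL γSV c : R}
    (hYoung : γLV * c = γSV - γSL) (χ d u v : M) :
    twoPhaseEnergy β γLV γSL γSV χ d u - twoPhaseEnergy β γLV γSL γSV χ d v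
      = γLV * β (u - v) (χ - (2 : R) • v - c • d) - γLV * β (u - v) (u - v) := by
  simp only [twoPhaseEnergy, map_sub, map_smul, LinearMap.sub_apply, smul_eq_mul, hβ.eq v u]
  linear_combination (β u d - β v d) * hYoung

end TwoPhaseEnergy

theorem two_phase_energy_expansion_general (n : ℕ)
    (Ωt Ω : Set (EuclideanSpace ℝ (Fin n)))
    (hΩtb : Bornology.IsBounded Ωt) (hΩtm : MeasurableSet Ωt)
    (hΩ : Ω ⊆ Ωt) (hΩm : MeasurableSet Ω)
    (γLV γSL γSV δt θY : ℝ)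
    (hγLV : 0 < γLV) (hδt : 0 < δt)
    (hYoung : γLV * Real.cos θY = γSV - γSL)
    (Etil : (EuclideanSpace ℝ (Fin n) → ℝ) → ℝ)
    (hEtil : Etil = fun u =>
      Efun n δt γLV γSL γSV (Ωt \ Ω) u (fun x => chi n Ω x - u x))
    (u v : EuclideanSpace ℝ (Fin n) → ℝ)
    (hmu : Measurable u) (hmv : Measurable v)
    (hbu : ∃ C, ∀ x, |u x| ≤ C) (hbv : ∃ C, ∀ x, |v x| ≤ C)
    (h0u : ∀ x, x ∉ Ω → u x = 0) (h0v : ∀ x, x ∉ Ω → v x = 0) :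
    Etil u - Etil v
      = (γLV / Real.sqrt δt) *
          (∫ x, (u x - v x) *
            gconv n δt (fun y => chi n Ω y - 2 * v y - Real.cos θY * chi n (Ωt \ Ω) y) x)
        - (γLV / Real.sqrt δt) *
            ∫ x, (u x - v x) * gconv n δt (fun y => u y - v y) x ∧
    Etil u ≤ Etil v
      + (γLV / Real.sqrt δt) *
          ∫ x, (u x - v x) *
            gconv n δt (fun y => chi n Ω y - 2 * v y - Real.cos θY * chi n (Ωt \ Ω) y) x := by
  have hΩt : volume Ωt < ⊤ := hΩtb.measure_lt_top
  have hΩfin : volume Ω < ⊤ := (measure_mono hΩ).trans_lt hΩt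
  obtain ⟨Cu, hCu⟩ := hbu
  obtain ⟨Cv, hCv⟩ := hbv
  let U : boundedIntegrable n := ⟨u, mem_boundedIntegrable hΩfin hmu.aestronglyMeasurable hCu h0u⟩
  let V : boundedIntegrable n := ⟨v, mem_boundedIntegrable hΩfin hmv.aestronglyMeasurable hCv h0v⟩
  let X : boundedIntegrable n := ⟨chi n Ω, chi_mem_boundedIntegrable hΩm hΩfin⟩
  let D : boundedIntegrable n := ⟨chi n (Ωt \ Ω),
    chi_mem_boundedIntegrable (hΩtm.diff hΩm) ((measure_mono sdiff_subset).trans_lt hΩt)⟩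
  have hEtil_eq : ∀ W : boundedIntegrable n,
      Etil W = 1 / Real.sqrt δt * twoPhaseEnergy (gaussForm hδt) γLV γSL γSV X D W := by
    intro W
    rw [hEtil]
    rfl
  have hexp : Etil u - Etil v
      = (γLV / Real.sqrt δt) * gaussForm hδt (U - V) (X - (2 : ℝ) • V - Real.cos θY • D)
        - (γLV / Real.sqrt δt) * gaussForm hδt (U - V) (U - V) := by
    rw [hEtil_eq U, hEtil_eq V, ← mul_sub,
      twoPhaseEnergy_sub (gaussForm_isSymm hδt) hYoung X D U V]
    ring
  have hquad : 0 ≤ γLV / Real.sqrt δt * gaussForm hδt (U - V) (U - V) :=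
    mul_nonneg (div_nonneg hγLV.le (sqrt_nonneg δt)) (gaussForm_self_nonneg hδt (U - V))
  have hle : Etil u ≤ Etil v
      + (γLV / Real.sqrt δt) * gaussForm hδt (U - V) (X - (2 : ℝ) • V - Real.cos θY • D) := by
    linarith
  exact ⟨hexp, hle⟩

/-- exact expansion of the two-phase energy `Ẽ(u) = E^{δt}(u, χ_Ω − u)`
around `v`, with nonpositive exact second-order term. -/
theorem two_phase_energy_expansion (n : ℕ) (hn : 1 ≤ n)
    (Ωt Ω : Set (EuclideanSpace ℝ (Fin n)))
    (hΩtb : Bornology.IsBounded Ωt) (hΩtm : MeasurableSet Ωt)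
    (hΩ : Ω ⊆ Ωt) (hΩm : MeasurableSet Ω)
    (γLV γSL γSV δt θY : ℝ)
    (hγLV : 0 < γLV) (hγSL : 0 < γSL) (hγSV : 0 < γSV) (hδt : 0 < δt)
    (hYoung : γLV * Real.cos θY = γSV - γSL)
    (Etil : (EuclideanSpace ℝ (Fin n) → ℝ) → ℝ)
    (hEtil : Etil = fun u =>
      Efun n δt γLV γSL γSV (Ωt \ Ω) u (fun x => chi n Ω x - u x))
    (u v : EuclideanSpace ℝ (Fin n) → ℝ)
    (hmu : Measurable u) (hmv : Measurable v)
    (hbu : ∃ C, ∀ x, |u x| ≤ C) (hbv : ∃ C, ∀ x, |v x| ≤ C)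
    (h01u : ∀ x, 0 ≤ u x ∧ u x ≤ 1) (h01v : ∀ x, 0 ≤ v x ∧ v x ≤ 1)
    (h0u : ∀ x, x ∉ Ω → u x = 0) (h0v : ∀ x, x ∉ Ω → v x = 0) :
    Etil u - Etil v
      = (γLV / Real.sqrt δt) *
          (∫ x, (u x - v x) *
            gconv n δt (fun y => chi n Ω y - 2 * v y - Real.cos θY * chi n (Ωt \ Ω) y) x)
        - (γLV / Real.sqrt δt) *
            ∫ x, (u x - v x) * gconv n δt (fun y => u y - v y) x ∧
    Etil u ≤ Etil v
      + (γLV / Real.sqrt δt) *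
          ∫ x, (u x - v x) *
            gconv n δt (fun y => chi n Ω y - 2 * v y - Real.cos θY * chi n (Ωt \ Ω) y) x :=
  two_phase_energy_expansion_general n Ωt Ω hΩtb hΩtm hΩ hΩm γLV γSL γSV δt θY hγLV hδt hYoung Etil
    hEtil u v hmu hmv hbu hbv h0u h0v
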